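/- arXiv:1907.05548 — 2 statements merged into one kernel-verified Lean document; each statement's English description precedes it below -/
import Mathlib

section
/- Let G = (A, B, E) be a bipartite graph with finite alphabets Σ_A, Σ_B and, for each edge e ∈ E, a projection constraint π_e : Σ_A → Σ_B. Let ℓ ≥ 1 be a natural number and let 0 < s < 1 be a real number. Suppose G has agreement soundness error s, i.e., for every labeling φ_A : A → Σ_A, the number of vertices b ∈ B for which there exist two distinct neighbors a₁, a₂ ∈ A of b with π_{(a₁,b)}(φ_A(a₁)) = π_{(a₂,b)}(φ_A(a₂)) is at most s·|B|. Then G has list agreement soundness error (ℓ, s·ℓ²), i.e., for every list labeling φ̂_A : A → (subsets of Σ_A of size ℓ), the number of vertices b ∈ B for which there exist two distinct neighbors a₁, a₂ ∈ A of b and labels σ₁ ∈ φ̂_A(a₁), σ₂ ∈ φ̂_A(a₂) with π_{(a₁,b)}(σ₁) = π_{(a₂,b)}(σ₂) is at most s·ℓ²·|B|. -/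
/-- **Agreement soundness implies list agreement soundness** (Moshkovitz).

A Label Cover instance is given by a finite bipartite graph with vertex sides `A`, `B`
(edges given by the relation `Adj`), finite alphabets `SA`, `SB`, and for each edge
`(a, b)` a projection `π a b : SA → SB`.

If the instance has agreement soundness error `s` — for every labeling `φ : A → SA`,
the number of vertices `b ∈ B` having two distinct neighbors `a₁, a₂` with
`π a₁ b (φ a₁) = π a₂ b (φ a₂)` is at most `s * |B|` — then it has list agreement
soundness error `(ℓ, s * ℓ²)`: for every list labeling `φ̂ : A → Finset SA` assigning
each vertex a set of `ℓ` symbols, the number of vertices `b ∈ B` having two distinct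
neighbors `a₁, a₂` and symbols `σ₁ ∈ φ̂ a₁`, `σ₂ ∈ φ̂ a₂` with
`π a₁ b σ₁ = π a₂ b σ₂` is at most `s * ℓ² * |B|`. -/
theorem agreement_soundness_implies_list_agreement_soundness
    {A B SA SB : Type*} [Fintype A] [Fintype B] [Fintype SA] [Fintype SB]
    (Adj : A → B → Prop) (π : A → B → SA → SB)
    (ℓ : ℕ) (hℓ : 1 ≤ ℓ) (s : ℝ) (hs0 : 0 < s) (hs1 : s < 1)
    (hsound : ∀ φ : A → SA,
      (Nat.card {b : B // ∃ a₁ a₂ : A, a₁ ≠ a₂ ∧ Adj a₁ b ∧ Adj a₂ b ∧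
          π a₁ b (φ a₁) = π a₂ b (φ a₂)} : ℝ) ≤ s * (Fintype.card B : ℝ)) :
    ∀ φhat : A → Finset SA, (∀ a, (φhat a).card = ℓ) →
      (Nat.card {b : B // ∃ a₁ a₂ : A, a₁ ≠ a₂ ∧ Adj a₁ b ∧ Adj a₂ b ∧
          ∃ σ₁ ∈ φhat a₁, ∃ σ₂ ∈ φhat a₂, π a₁ b σ₁ = π a₂ b σ₂} : ℝ)
        ≤ s * (ℓ : ℝ) ^ 2 * (Fintype.card B : ℝ) := by
  classical
  intro φhat hcard
  rw [Nat.card_eq_fintype_card, Fintype.card_subtype]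
  set P : B → Prop := fun b => ∃ a₁ a₂ : A, a₁ ≠ a₂ ∧ Adj a₁ b ∧ Adj a₂ b ∧
      ∃ σ₁ ∈ φhat a₁, ∃ σ₂ ∈ φhat a₂, π a₁ b σ₁ = π a₂ b σ₂ with hPdef
  by_cases hL : (Finset.univ.filter P).Nonempty
  swap
  · rw [Finset.not_nonempty_iff_eq_empty] at hL
    rw [hL]
    simp only [Finset.card_empty, Nat.cast_zero]
    positivity
  obtain ⟨b₀, hb₀⟩ := hL
  obtain ⟨a₁', a₂', hne', -⟩ := (Finset.mem_filter.mp hb₀).2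
  have hN2 : 2 ≤ Fintype.card A := Fintype.one_lt_card_iff.mpr ⟨a₁', a₂', hne'⟩
  set N := Fintype.card A with hNdef
  have e : ∀ a : A, {x // x ∈ φhat a} ≃ Fin ℓ := fun a => (φhat a).equivFinOfCardEq (hcard a)
  set lab : (A → Fin ℓ) → A → SA := fun F a => ((e a).symm (F a) : SA) with hlab
  set Agr : (A → Fin ℓ) → Finset B := fun F => Finset.univ.filter
      (fun b => ∃ a₁ a₂ : A, a₁ ≠ a₂ ∧ Adj a₁ b ∧ Adj a₂ b ∧
        π a₁ b (lab F a₁) = π a₂ b (lab F a₂)) with hAgr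
  have hAgrCard : ∀ F : A → Fin ℓ, ((Agr F).card : ℝ) ≤ s * Fintype.card B := by
    intro F
    have h := hsound (lab F)
    rwa [Nat.card_eq_fintype_card, Fintype.card_subtype] at h
  have hkey : ∀ b ∈ Finset.univ.filter P,
      ℓ ^ (N - 2) ≤ (Finset.univ.filter (fun F : A → Fin ℓ => b ∈ Agr F)).card := by
    intro b hb
    obtain ⟨a₁, a₂, hne, hadj₁, hadj₂, σ₁, hσ₁, σ₂, hσ₂, heq⟩ := (Finset.mem_filter.mp hb).2
    set i₁ := e a₁ ⟨σ₁, hσ₁⟩ with hi₁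
    set i₂ := e a₂ ⟨σ₂, hσ₂⟩ with hi₂
    set Φ : ({a : A // a ≠ a₁ ∧ a ≠ a₂} → Fin ℓ) → (A → Fin ℓ) := fun g a =>
      if h1 : a = a₁ then i₁ else if h2 : a = a₂ then i₂ else g ⟨a, h1, h2⟩ with hΦ
    have hΦ₁ : ∀ g, Φ g a₁ = i₁ := fun g => dif_pos rfl
    have hΦ₂ : ∀ g, Φ g a₂ = i₂ := by
      intro g
      simp [hΦ, Ne.symm hne]
    have hmem : ∀ g, b ∈ Agr (Φ g) := by
      intro g
      refine Finset.mem_filter.mpr ⟨Finset.mem_univ _, a₁, a₂, hne, hadj₁, hadj₂, ?_⟩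
      have h1 : lab (Φ g) a₁ = σ₁ := by
        simp only [hlab, hΦ₁ g, hi₁, Equiv.symm_apply_apply]
      have h2 : lab (Φ g) a₂ = σ₂ := by
        simp only [hlab, hΦ₂ g, hi₂, Equiv.symm_apply_apply]
      rw [h1, h2]; exact heq
    have hinj : Function.Injective (fun g => (⟨Φ g, by
        simp only [Finset.mem_filter, Finset.mem_univ, true_and]; exact hmem g⟩ :
        {F : A → Fin ℓ // F ∈ Finset.univ.filter (fun F => b ∈ Agr F)})) := by
      intro g g' h
      have h' : Φ g = Φ g' := congrArg Subtype.val h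
      funext x
      obtain ⟨a, h1, h2⟩ := x
      have hx := congrFun h' a
      simpa [hΦ, dif_neg h1, dif_neg h2] using hx
    have hle := Fintype.card_le_of_injective _ hinj
    rw [Fintype.card_fun, Fintype.card_fin, Fintype.card_coe] at hle
    have hsub : Fintype.card {a : A // a ≠ a₁ ∧ a ≠ a₂} = N - 2 := by
      rw [Fintype.card_subtype]
      have hset : Finset.univ.filter (fun a : A => a ≠ a₁ ∧ a ≠ a₂)
          = ({a₁, a₂} : Finset A)ᶜ := by
        ext a
        simp [not_or]
      rw [hset, Finset.card_compl, Finset.card_pair hne]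
    rwa [hsub] at hle
  have hswap : ∑ F : A → Fin ℓ, (Agr F).card
      = ∑ b : B, (Finset.univ.filter (fun F : A → Fin ℓ => b ∈ Agr F)).card := by
    simp only [hAgr, Finset.card_filter, Finset.mem_filter, Finset.mem_univ, true_and]
    exact Finset.sum_comm
  have hT1 : (Finset.univ.filter P).card * ℓ ^ (N - 2)
      ≤ ∑ F : A → Fin ℓ, (Agr F).card := by
    rw [hswap]
    calc (Finset.univ.filter P).card * ℓ ^ (N - 2)
        = ∑ _b ∈ Finset.univ.filter P, ℓ ^ (N - 2) := by
          rw [Finset.sum_const, smul_eq_mul]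
      _ ≤ ∑ b ∈ Finset.univ.filter P,
            (Finset.univ.filter (fun F : A → Fin ℓ => b ∈ Agr F)).card :=
          Finset.sum_le_sum hkey
      _ ≤ ∑ b : B, (Finset.univ.filter (fun F : A → Fin ℓ => b ∈ Agr F)).card :=
          Finset.sum_le_sum_of_subset (Finset.filter_subset _ _)
  have hT2 : ((∑ F : A → Fin ℓ, (Agr F).card : ℕ) : ℝ)
      ≤ (ℓ : ℝ) ^ N * (s * Fintype.card B) := by
    push_cast
    calc ∑ F : A → Fin ℓ, ((Agr F).card : ℝ)
        ≤ ∑ _F : A → Fin ℓ, s * Fintype.card B :=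
          Finset.sum_le_sum (fun F _ => hAgrCard F)
      _ = (Fintype.card (A → Fin ℓ) : ℝ) * (s * Fintype.card B) := by
          rw [Finset.sum_const, nsmul_eq_mul, Finset.card_univ]
      _ = (ℓ : ℝ) ^ N * (s * Fintype.card B) := by
          rw [Fintype.card_fun, Fintype.card_fin]
          push_cast
          ring
  have hc : (0 : ℝ) < (ℓ : ℝ) ^ (N - 2) := by
    have : (0:ℝ) < (ℓ:ℝ) := by exact_mod_cast hℓ
    positivity
  have hmain : ((Finset.univ.filter P).card : ℝ) * (ℓ : ℝ) ^ (N - 2)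
      ≤ (ℓ : ℝ) ^ N * (s * Fintype.card B) := by
    calc ((Finset.univ.filter P).card : ℝ) * (ℓ : ℝ) ^ (N - 2)
        = (((Finset.univ.filter P).card * ℓ ^ (N - 2) : ℕ) : ℝ) := by push_cast; ring
      _ ≤ _ := le_trans (Nat.cast_le.mpr hT1) hT2
  have hpow : (ℓ : ℝ) ^ N = (ℓ : ℝ) ^ (N - 2) * (ℓ : ℝ) ^ 2 := by
    rw [← pow_add]
    congr 1
    omega
  rw [hpow] at hmain
  have hfin : ((Finset.univ.filter P).card : ℝ) ≤ s * (ℓ : ℝ) ^ 2 * Fintype.card B :=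
    le_of_mul_le_mul_right (by nlinarith [hmain]) hc
  exact hfin
end

section
/- Let G = (A, B, E) be a finite bipartite graph with finite alphabets Σ_A, Σ_B (with Σ_A nonempty) and, for each edge e ∈ E, a projection constraint π_e : Σ_A → Σ_B. Let ℓ ≥ 1 and let φ̂_A : A → (subsets of Σ_A of size ℓ) be a list labeling. Let D ⊆ B be the set of vertices b ∈ B on which there exist two distinct neighbors a₁, a₂ ∈ A of b and labels σ₁ ∈ φ̂_A(a₁), σ₂ ∈ φ̂_A(a₂) with π_{(a₁,b)}(σ₁) = π_{(a₂,b)}(σ₂). Then there exists a single-label labeling φ_A : A → Σ_A with φ_A(a) ∈ φ̂_A(a) for every a ∈ A, such that the number of vertices b ∈ B that have two distinct neighbors a₁, a₂ with π_{(a₁,b)}(φ_A(a₁)) = π_{(a₂,b)}(φ_A(a₂)) is at least |D|/ℓ². -/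
open Finset

/-- **Averaging step of the agreement-to-list-agreement reduction.**

Let `A`, `B` be the two sides of a finite bipartite Label Cover instance with edges
given by `Adj`, finite alphabets `SA` (nonempty), `SB`, and for each edge `(a, b)` a
projection `π a b : SA → SB`. Let `ℓ ≥ 1` and let `φ̂ : A → Finset SA` be a list
labeling assigning each vertex a set of `ℓ` symbols. Let `D ⊆ B` be the set of
vertices `b` having two distinct neighbors `a₁, a₂` and symbols `σ₁ ∈ φ̂ a₁`,
`σ₂ ∈ φ̂ a₂` with `π a₁ b σ₁ = π a₂ b σ₂`. Then there is a single-label labeling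
`φ : A → SA` with `φ a ∈ φ̂ a` for all `a`, such that the number of vertices `b`
having two distinct neighbors `a₁, a₂` with `π a₁ b (φ a₁) = π a₂ b (φ a₂)` is at
least `|D| / ℓ²`. -/
theorem exists_labeling_agreement_ge_list_agreement_div_sq
    {A B SA SB : Type*} [Fintype A] [Fintype B] [Fintype SA] [Fintype SB]
    [Nonempty SA]
    (Adj : A → B → Prop) (π : A → B → SA → SB)
    (ℓ : ℕ) (hℓ : 1 ≤ ℓ)
    (φhat : A → Finset SA) (hcard : ∀ a, (φhat a).card = ℓ) :
    ∃ φ : A → SA, (∀ a, φ a ∈ φhat a) ∧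
      (Nat.card {b : B // ∃ a₁ a₂ : A, a₁ ≠ a₂ ∧ Adj a₁ b ∧ Adj a₂ b ∧
          ∃ σ₁ ∈ φhat a₁, ∃ σ₂ ∈ φhat a₂, π a₁ b σ₁ = π a₂ b σ₂} : ℝ) / (ℓ : ℝ) ^ 2
        ≤ (Nat.card {b : B // ∃ a₁ a₂ : A, a₁ ≠ a₂ ∧ Adj a₁ b ∧ Adj a₂ b ∧
            π a₁ b (φ a₁) = π a₂ b (φ a₂)} : ℝ) := by
  classical
  set n := Fintype.card A with hn
  set S : Finset (A → SA) := Fintype.piFinset φhat with hS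
  have hScard : S.card = ℓ ^ n := by
    simp [hS, Fintype.card_piFinset, hcard, hn]
  have hSne : S.Nonempty := by
    rw [← Finset.card_pos, hScard]; positivity
  set Pl : B → Prop := fun b => ∃ a₁ a₂ : A, a₁ ≠ a₂ ∧ Adj a₁ b ∧ Adj a₂ b ∧
      ∃ σ₁ ∈ φhat a₁, ∃ σ₂ ∈ φhat a₂, π a₁ b σ₁ = π a₂ b σ₂ with hPl
  set Q : (A → SA) → B → Prop := fun φ b => ∃ a₁ a₂ : A, a₁ ≠ a₂ ∧ Adj a₁ b ∧ Adj a₂ b ∧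
      π a₁ b (φ a₁) = π a₂ b (φ a₂) with hQ
  set N : (A → SA) → ℕ := fun φ => (univ.filter (Q φ)).card with hN
  have key : ∀ b : B, Pl b → ℓ ^ n ≤ ℓ ^ 2 * (S.filter (fun φ => Q φ b)).card := by
    intro b hb
    obtain ⟨a₁, a₂, hne, h1, h2, σ₁, hσ₁, σ₂, hσ₂, hπ⟩ := hb
    set ψ : A → Finset SA := fun a => if a = a₁ then {σ₁} else if a = a₂ then {σ₂} else φhat a
      with hψ
    have hψ1 : ψ a₁ = {σ₁} := by simp [hψ]
    have hψ2 : ψ a₂ = {σ₂} := by simp [hψ, hne.symm]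
    have hsub : Fintype.piFinset ψ ⊆ S.filter (fun φ => Q φ b) := by
      intro φ hφ
      rw [Fintype.mem_piFinset] at hφ
      have h₁ : φ a₁ = σ₁ := by have := hφ a₁; rw [hψ1] at this; simpa using this
      have h₂ : φ a₂ = σ₂ := by have := hφ a₂; rw [hψ2] at this; simpa using this
      refine mem_filter.mpr ⟨Fintype.mem_piFinset.mpr fun a => ?_,
        a₁, a₂, hne, h1, h2, by rw [h₁, h₂]; exact hπ⟩
      have := hφ a
      by_cases e1 : a = a₁
      · subst e1; rw [hψ1] at this; simp at this; rw [this]; exact hσ₁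
      · by_cases e2 : a = a₂
        · subst e2; rw [hψ2] at this; simp at this; rw [this]; exact hσ₂
        · simpa [hψ, e1, e2] using this
    have h2n : 2 ≤ n := Fintype.one_lt_card_iff.mpr ⟨a₁, a₂, hne⟩
    have hψcard : (Fintype.piFinset ψ).card = ℓ ^ (n - 2) := by
      rw [Fintype.card_piFinset]
      have hpair : ({a₁, a₂} : Finset A) ⊆ univ := subset_univ _
      rw [← Finset.prod_sdiff hpair]
      have e1 : ∏ a ∈ ({a₁, a₂} : Finset A), (ψ a).card = 1 := by
        rw [Finset.prod_pair hne, hψ1, hψ2]; simp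
      have e2 : ∏ a ∈ univ \ ({a₁, a₂} : Finset A), (ψ a).card = ℓ ^ (n - 2) := by
        rw [Finset.prod_congr rfl (fun a ha => ?_)]
        · rw [Finset.prod_const, Finset.card_sdiff_of_subset hpair, Finset.card_pair hne, Finset.card_univ]
        · simp only [Finset.mem_sdiff, Finset.mem_insert, Finset.mem_singleton] at ha
          push_neg at ha
          rw [hψ]; simp [ha.2.1, ha.2.2, hcard]
      rw [e1, e2, mul_one]
    calc ℓ ^ n = ℓ ^ 2 * ℓ ^ (n - 2) := by rw [← pow_add]; congr 1; omega
    _ = ℓ ^ 2 * (Fintype.piFinset ψ).card := by rw [hψcard]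
    _ ≤ ℓ ^ 2 * (S.filter (fun φ => Q φ b)).card :=
        Nat.mul_le_mul_left _ (Finset.card_le_card hsub)
  set Dfin : Finset B := univ.filter Pl with hD
  have swap : ∑ φ ∈ S, N φ = ∑ b : B, (S.filter (fun φ => Q φ b)).card := by
    simp only [hN, Finset.card_filter]
    rw [Finset.sum_comm]
  have main : Dfin.card * ℓ ^ n ≤ ℓ ^ 2 * ∑ φ ∈ S, N φ := by
    calc Dfin.card * ℓ ^ n = ∑ _b ∈ Dfin, ℓ ^ n := by rw [Finset.sum_const, smul_eq_mul]
    _ ≤ ∑ b ∈ Dfin, ℓ ^ 2 * (S.filter (fun φ => Q φ b)).card :=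
        Finset.sum_le_sum fun b hb => key b (by simpa [hD] using hb)
    _ ≤ ∑ b : B, ℓ ^ 2 * (S.filter (fun φ => Q φ b)).card :=
        Finset.sum_le_sum_of_subset (subset_univ _)
    _ = ℓ ^ 2 * ∑ b : B, (S.filter (fun φ => Q φ b)).card := by rw [Finset.mul_sum]
    _ = ℓ ^ 2 * ∑ φ ∈ S, N φ := by rw [swap]
  have hex : ∃ φ ∈ S, Dfin.card ≤ ℓ ^ 2 * N φ := by
    by_contra hcon
    push_neg at hcon
    have hlt : ∑ φ ∈ S, ℓ ^ 2 * N φ < ∑ _φ ∈ S, Dfin.card :=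
      Finset.sum_lt_sum_of_nonempty hSne fun φ hφ => hcon φ hφ
    rw [Finset.sum_const, smul_eq_mul, ← Finset.mul_sum, hScard] at hlt
    have hcontra := lt_of_le_of_lt main hlt
    rw [Nat.mul_comm] at hcontra
    exact lt_irrefl _ hcontra
  obtain ⟨φ, hφS, hφ⟩ := hex
  refine ⟨φ, fun a => (Fintype.mem_piFinset.mp hφS) a, ?_⟩
  have hcard1 : Nat.card {b : B // Pl b} = Dfin.card := by
    rw [Nat.card_eq_fintype_card, Fintype.card_subtype]
  have hcard2 : Nat.card {b : B // Q φ b} = N φ := by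
    rw [Nat.card_eq_fintype_card, Fintype.card_subtype]
  have goal' : (Nat.card {b : B // Pl b} : ℝ) / (ℓ : ℝ) ^ 2 ≤ (Nat.card {b : B // Q φ b} : ℝ) := by
    rw [hcard1, hcard2, div_le_iff₀ (by positivity)]
    have : (Dfin.card : ℝ) ≤ ((ℓ ^ 2 * N φ : ℕ) : ℝ) := by exact_mod_cast hφ
    push_cast at this
    linarith
  exact goal'
end
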